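/- arXiv:1606.08649 — 2 statements merged into one kernel-verified Lean document; each statement's English description precedes it below -/
import Mathlib

section
/- In a pointed finitely complete category, a point (f : A → B, s : B → A) is strong if and only if the pair (ker(f) : Ker(f) → A, s : B → A) is jointly strongly epimorphic. -/
/-!
Enlarging the first leg of a jointly strongly epimorphic pair preserves the property.
The kernel of `f` is the pullback of `f` along `0 ⟶ B`, which gives one direction;
conversely `ker f` factors through the pullback of `f` along any `g : X ⟶ B`, via the
zero map into `X`.
-/

open CategoryTheory CategoryTheory.Limits

universe v u

variable {C : Type u} [Category.{v} C]

/-- A cospan `(r, s)` is jointly strongly epimorphic: whenever both `r` and `s`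
factor through a monomorphism `m`, the monomorphism `m` is an isomorphism. -/
def JointlyStronglyEpi {X Y A : C} (r : X ⟶ A) (s : Y ⟶ A) : Prop :=
  ∀ ⦃M : C⦄ (m : M ⟶ A), Mono m →
    (∃ r' : X ⟶ M, r' ≫ m = r) → (∃ s' : Y ⟶ M, s' ≫ m = s) → IsIso m

/-- A point `(f, s)` over `B` is strong: for every `g : X ⟶ B`, the second
projection of the pullback of `f` along `g` together with `s` is a jointly
strongly epimorphic pair. -/
def IsStrongPoint [HasPullbacks C] {A B : C} (f : A ⟶ B) (s : B ⟶ A) : Prop :=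
  ∀ ⦃X : C⦄ (g : X ⟶ B), JointlyStronglyEpi (pullback.snd g f) s

/-- A point `(f, s)` over `B` is stably strong: every pullback of it along a
morphism `g : X ⟶ B` is a strong point. -/
def IsStablyStrongPoint [HasPullbacks C] {A B : C} (f : A ⟶ B) (s : B ⟶ A)
    (hs : s ≫ f = 𝟙 B) : Prop :=
  ∀ ⦃X : C⦄ (g : X ⟶ B),
    IsStrongPoint (pullback.fst g f)
      (pullback.lift (𝟙 X) (g ≫ s) (by simp [hs]))

/-- An object `Y` is a Mal'tsev object: for every pullback of split
epimorphisms over `Y`, the two induced sections are jointly strongly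
epimorphic. -/
def IsMaltsevObject [HasPullbacks C] (Y : C) : Prop :=
  ∀ ⦃A X : C⦄ (f : A ⟶ Y) (s : Y ⟶ A) (g : X ⟶ Y) (t : Y ⟶ X)
    (hs : s ≫ f = 𝟙 Y) (ht : t ≫ g = 𝟙 Y),
    JointlyStronglyEpi
      (pullback.lift (𝟙 A) (f ≫ t) (by simp [ht]) : A ⟶ pullback f g)
      (pullback.lift (g ≫ s) (𝟙 X) (by simp [hs]) : X ⟶ pullback f g)

/-- An object `Y` is protomodular: every point over `Y` is stably strong. -/
def IsProtomodularObject [HasPullbacks C] (Y : C) : Prop :=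
  ∀ ⦃A : C⦄ (f : A ⟶ Y) (s : Y ⟶ A) (hs : s ≫ f = 𝟙 Y), IsStablyStrongPoint f s hs

/-- `f` is a regular epimorphism. -/
def IsRegularEpi' {X Y : C} (f : X ⟶ Y) : Prop := Nonempty (RegularEpi f)

/-- A commutative square `f' ≫ β = α ≫ f` of regular epimorphisms is a regular
pushout if the comparison morphism into the pullback of `β` and `f` is a
regular epimorphism. -/
def IsRegularPushout [HasPullbacks C] {A' A B' B : C}
    (α : A' ⟶ A) (f' : A' ⟶ B') (f : A ⟶ B) (β : B' ⟶ B)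
    (w : f' ≫ β = α ≫ f) : Prop :=
  IsRegularEpi' α ∧ IsRegularEpi' β ∧ IsRegularEpi' f' ∧ IsRegularEpi' f ∧
    IsRegularEpi' (pullback.lift f' α w)

/-- `Y` is a strongly unital object. -/
def StronglyUnitalObject [HasPullbacks C] [HasBinaryProducts C] (Y : C) : Prop :=
  IsStablyStrongPoint (prod.fst : Y ⨯ Y ⟶ Y) (prod.lift (𝟙 Y) (𝟙 Y)) (prod.lift_fst _ _)

/-- `Y` is a unital object. -/
def UnitalObject [HasPullbacks C] [HasBinaryProducts C] [HasZeroMorphisms C]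
    (Y : C) : Prop :=
  IsStablyStrongPoint (prod.fst : Y ⨯ Y ⟶ Y) (prod.lift (𝟙 Y) 0) (prod.lift_fst _ _)

/-- `Y` is a subtractive object: for every split right punctual span
`(s, f, g, t)` over `Y`, the composite `ker(g) ≫ f` is a regular epimorphism. -/
def SubtractiveObject [HasZeroMorphisms C] [HasKernels C] (Y : C) : Prop :=
  ∀ ⦃X Z : C⦄ (s : X ⟶ Z) (f : Z ⟶ X) (g : Z ⟶ Y) (t : Y ⟶ Z),
    s ≫ f = 𝟙 X → t ≫ g = 𝟙 Y → t ≫ f = 0 →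
    IsRegularEpi' (kernel.ι g ≫ f)

open ZeroObject

theorem JointlyStronglyEpi.of_comp {X X' Y A : C} (k : X' ⟶ X) {r : X ⟶ A} {s : Y ⟶ A}
    (h : JointlyStronglyEpi (k ≫ r) s) : JointlyStronglyEpi r s := by
  rintro M m hm ⟨r', hr'⟩ hs'
  exact h m hm ⟨k ≫ r', by rw [Category.assoc, hr']⟩ hs'

theorem statement3_general [HasFiniteLimits C] [HasZeroObject C] [HasZeroMorphisms C]
    {A B : C} (f : A ⟶ B) (s : B ⟶ A) :
    IsStrongPoint f s ↔ JointlyStronglyEpi (kernel.ι f) s := by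
  constructor
  · intro h
    have hker : pullback.snd (0 : (0 : C) ⟶ B) f ≫ f = 0 := by
      rw [← pullback.condition, comp_zero]
    apply JointlyStronglyEpi.of_comp (kernel.lift f _ hker)
    rw [kernel.lift_ι]
    exact h 0
  · intro h X g
    apply JointlyStronglyEpi.of_comp (pullback.lift 0 (kernel.ι f) (by simp))
    rwa [pullback.lift_snd]

/-- In a pointed finitely complete category, a point `(f, s)` is strong iff the
pair `(ker f, s)` is jointly strongly epimorphic. -/
theorem statement3 [HasFiniteLimits C] [HasZeroObject C] [HasZeroMorphisms C]
    {A B : C} (f : A ⟶ B) (s : B ⟶ A) (hs : s ≫ f = 𝟙 B) :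
    IsStrongPoint f s ↔ JointlyStronglyEpi (kernel.ι f) s :=
  statement3_general f s
end

section
/- In a pointed finitely complete category, if (f : A → B, s : B → A) is a strong point, then f is a normal epimorphism, i.e. f is the cokernel of its kernel ker(f) : Ker(f) → A. -/
/-!
Pulling the strong point back along `0 ⟶ B` shows that `ker f` and `s` are jointly strongly
epimorphic, hence jointly epimorphic (test against equalizers). A map `u` killing `ker f` agrees
with `f ≫ s ≫ u` on both `ker f` and `s`, so `u = f ≫ (s ≫ u)` factors through `f`, uniquely
because `f` is split epi.
-/

open CategoryTheory CategoryTheory.Limits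

universe v u

variable {C : Type u} [Category.{v} C]

open ZeroObject

lemma JointlyStronglyEpi.of_comp_left {X X' Y A : C} {x : X ⟶ X'} {r : X' ⟶ A} {s : Y ⟶ A}
    (h : JointlyStronglyEpi (x ≫ r) s) : JointlyStronglyEpi r s := by
  rintro M m hm ⟨r', hr'⟩ hs
  exact h m hm ⟨x ≫ r', by rw [Category.assoc, hr']⟩ hs

lemma JointlyStronglyEpi.hom_ext {X Y A Q : C} {r : X ⟶ A} {s : Y ⟶ A}
    (h : JointlyStronglyEpi r s) {u v : A ⟶ Q} [HasEqualizer u v]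
    (hr : r ≫ u = r ≫ v) (hs : s ≫ u = s ≫ v) : u = v := by
  have : IsIso (equalizer.ι u v) := h _ inferInstance
    ⟨equalizer.lift r hr, equalizer.lift_ι _ _⟩ ⟨equalizer.lift s hs, equalizer.lift_ι _ _⟩
  exact (cancel_epi (equalizer.ι u v)).1 (equalizer.condition u v)

lemma IsStrongPoint.jointlyStronglyEpi_kernel_ι [HasPullbacks C] [HasZeroObject C]
    [HasZeroMorphisms C] {A B : C} {f : A ⟶ B} {s : B ⟶ A} [HasKernel f]
    (h : IsStrongPoint f s) : JointlyStronglyEpi (kernel.ι f) s := by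
  have hsnd : pullback.snd (0 : (0 : C) ⟶ B) f ≫ f = 0 := by
    rw [← pullback.condition, comp_zero]
  refine JointlyStronglyEpi.of_comp_left (x := kernel.lift f _ hsnd) ?_
  rw [kernel.lift_ι]
  exact h 0

/-- In a pointed finitely complete category, if `(f, s)` is a strong point then
`f` is a normal epimorphism, i.e. `f` is the cokernel of its kernel. -/
theorem statement4 [HasFiniteLimits C] [HasZeroObject C] [HasZeroMorphisms C]
    {A B : C} (f : A ⟶ B) (s : B ⟶ A) (hs : s ≫ f = 𝟙 B)
    (h : IsStrongPoint f s) :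
    Nonempty (IsColimit (CokernelCofork.ofπ f (kernel.condition f))) := by
  have fac : ∀ {Q : C} (u : A ⟶ Q), kernel.ι f ≫ u = 0 → f ≫ s ≫ u = u := fun u hu =>
    h.jointlyStronglyEpi_kernel_ι.hom_ext (by rw [kernel.condition_assoc, zero_comp, hu])
      (by rw [reassoc_of% hs])
  have : Epi f := (IsSplitEpi.mk' ⟨s, hs⟩).epi
  exact ⟨CokernelCofork.IsColimit.ofπ f _ (fun u _ => s ≫ u) fac
    fun u hu v hv => (cancel_epi f).1 (by rw [hv, fac u hu])⟩
end
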